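/- arXiv:0801.2987 — 2 statements merged into one kernel-verified Lean document; each statement's English description precedes it below -/
import Mathlib

section
/- Let A be an n×n symmetric matrix over a field F. Then rank(A) ≤ k if and only if there exist an invertible symmetric k×k matrix B and a k×n matrix U over F such that A = Uᵀ B U. -/
/-!
Let `r = rank A`, let `C` be an `n × r` matrix whose columns form a basis of the column space
of `A`, and `P` a left inverse of `C`. Then `C * P * A = A`, and transposing, `A * Pᵀ * Cᵀ = A`
when `A` is symmetric; hence `A = C * (P * A * Pᵀ) * Cᵀ`. The `r × r` matrix `P * A * Pᵀ` is
symmetric, and invertible because its rank is at least `rank A = r`. Adding an identity block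
enlarges it to any size `k ≥ r`. Conversely `rank (Uᵀ * B * U) ≤ rank U ≤ k`.
-/

open Matrix

namespace Matrix

variable {R : Type*} [CommRing R] {m n ι κ : Type*} [Fintype ι] [Fintype κ]

def HasCongruenceDecomp (ι : Type*) [Fintype ι] [DecidableEq ι] (A : Matrix m m R) : Prop :=
  ∃ (B : Matrix ι ι R) (U : Matrix ι m R), B.IsSymm ∧ IsUnit B ∧ A = Uᵀ * B * U

namespace HasCongruenceDecomp

variable [DecidableEq ι] [DecidableEq κ] {A : Matrix m m R}

theorem reindex (e : ι ≃ κ) (hA : A.HasCongruenceDecomp ι) : A.HasCongruenceDecomp κ := by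
  obtain ⟨B, U, hB, hBu, rfl⟩ := hA
  refine ⟨B.submatrix e.symm e.symm, U.submatrix e.symm id, hB.submatrix _,
    (isUnit_submatrix_equiv _ _).2 hBu, ?_⟩
  rw [transpose_submatrix, submatrix_mul_equiv, submatrix_mul_equiv, submatrix_id_id]

theorem sum (hA : A.HasCongruenceDecomp ι) : A.HasCongruenceDecomp (ι ⊕ κ) := by
  obtain ⟨B, U, hB, hBu, rfl⟩ := hA
  refine ⟨fromBlocks B 0 0 1, fromRows U 0, hB.fromBlocks (by simp) isSymm_one, ?_, ?_⟩
  · rw [isUnit_iff_isUnit_det, det_fromBlocks_zero₂₁, det_one, mul_one]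
    exact (isUnit_iff_isUnit_det B).1 hBu
  · rw [transpose_fromRows, fromCols_mul_fromBlocks, fromCols_mul_fromRows]
    simp

theorem of_card_le {k : ℕ} (hA : A.HasCongruenceDecomp ι) (hk : Fintype.card ι ≤ k) :
    A.HasCongruenceDecomp (Fin k) :=
  (hA.sum (κ := Fin (k - Fintype.card ι))).reindex
    (Fintype.equivFinOfCardEq (by simp only [Fintype.card_sum, Fintype.card_fin]; omega))

theorem rank_le [Fintype m] [StrongRankCondition R] (hA : A.HasCongruenceDecomp ι) :
    A.rank ≤ Fintype.card ι := by
  obtain ⟨B, U, -, -, rfl⟩ := hA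
  exact (rank_mul_le_right _ _).trans U.rank_le_card_height

end HasCongruenceDecomp

theorem IsSymm.eq_mul_mul_transpose_of_mul_mul_eq [Fintype n] {A : Matrix n n R}
    (hA : A.IsSymm) {C : Matrix n ι R} {P : Matrix ι n R} (h : C * P * A = A) :
    A = C * (P * A * Pᵀ) * Cᵀ := by
  have h' : A * Pᵀ * Cᵀ = A := by
    simpa only [transpose_mul, hA.eq, Matrix.mul_assoc] using congrArg (·ᵀ) h
  calc A = C * P * (A * Pᵀ * Cᵀ) := by rw [h', h]
    _ = C * (P * A * Pᵀ) * Cᵀ := by simp only [Matrix.mul_assoc]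

variable {K : Type*} [Field K] [Fintype m] [Fintype n]

theorem isUnit_of_card_le_rank [DecidableEq ι] {S : Matrix ι ι K}
    (h : Fintype.card ι ≤ S.rank) : IsUnit S := by
  rw [← linearIndependent_cols_iff_isUnit, linearIndependent_iff_card_eq_finrank_span,
    Set.finrank, ← rank_eq_finrank_span_cols]
  exact le_antisymm h S.rank_le_card_width

theorem exists_mul_mul_eq_self (A : Matrix m n K) :
    ∃ (C : Matrix m (Fin A.rank) K) (P : Matrix (Fin A.rank) m K), C * P * A = A := by
  classical
  let e := (Module.finBasisOfFinrankEq K _ rfl : Module.Basis (Fin A.rank) K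
    (LinearMap.range A.mulVecLin)).equivFun
  let i := (LinearMap.range A.mulVecLin).subtype ∘ₗ e.symm.toLinearMap
  obtain ⟨p, hp⟩ := i.exists_leftInverse_of_injective
    (LinearMap.ker_eq_bot.2 ((Submodule.injective_subtype _).comp e.symm.injective))
  refine ⟨LinearMap.toMatrix' i, LinearMap.toMatrix' p, toLin'.injective ?_⟩
  refine LinearMap.ext fun v => ?_
  have hi : i (e ⟨A *ᵥ v, v, rfl⟩) = A *ᵥ v := by simp [i]
  simp only [toLin'_mul, toLin'_toMatrix', LinearMap.comp_apply, toLin'_apply]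
  rw [← hi, ← LinearMap.comp_apply p, hp, LinearMap.id_apply]

theorem IsSymm.hasCongruenceDecomp_fin_rank {A : Matrix m m K} (hA : A.IsSymm) :
    A.HasCongruenceDecomp (Fin A.rank) := by
  obtain ⟨C, P, hCP⟩ := exists_mul_mul_eq_self A
  have hA' := hA.eq_mul_mul_transpose_of_mul_mul_eq hCP
  refine ⟨P * A * Pᵀ, Cᵀ, ?_, isUnit_of_card_le_rank ?_, by rwa [transpose_transpose]⟩
  · simp only [IsSymm, transpose_mul, transpose_transpose, hA.eq, Matrix.mul_assoc]
  · rw [Fintype.card_fin]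
    conv_lhs => rw [hA']
    exact (rank_mul_le_left _ _).trans (rank_mul_le_right _ _)

end Matrix

theorem rank_le_iff_exists_congruence_decomp {F : Type*} [Field F] {n k : ℕ}
    (A : Matrix (Fin n) (Fin n) F) (hA : A.IsSymm) :
    A.rank ≤ k ↔ ∃ (B : Matrix (Fin k) (Fin k) F) (U : Matrix (Fin k) (Fin n) F),
      B.IsSymm ∧ IsUnit B ∧ A = Uᵀ * B * U := by
  constructor
  · intro hk
    exact hA.hasCongruenceDecomp_fin_rank.of_card_le (by rwa [Fintype.card_fin])
  · intro h
    simpa using HasCongruenceDecomp.rank_le (ι := Fin k) h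
end

section
/- Let F = 𝔽_q with q odd, let k be odd, and let ν be a nonsquare in F. Then the matrix diag(I_{k−1}, ν) is projectively congruent to I_k; that is, there exist a nonzero d ∈ F and an invertible matrix C with diag(I_{k−1}, ν) congruent to d·I_k, and one may take d = ν (since det(ν·diag(I_{k−1},ν)) = ν^{k+1} is a square). -/
/-!
Multiplying out, the claim asks for `C` with `Cᵀ * C = diag(ν⁻¹, …, ν⁻¹, 1)`. In a finite field
`ν⁻¹ = a² + b²` for some `a, b`, and the block `[[a, b], [-b, a]]` satisfies
`Aᵀ * A = (a² + b²) • 1`. Since `k - 1` is even, `(k - 1) / 2` copies of this block followed by a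
single `1` give `C`; it is invertible because `Cᵀ * C` is.
-/

open Matrix

theorem FiniteField.exists_sq_add_sq {F : Type*} [Field F] [Fintype F] (x : F) :
    ∃ a b : F, a ^ 2 + b ^ 2 = x := by
  by_cases hF : Fintype.card F % 2 = 1
  · obtain ⟨a, b, hab⟩ := exists_root_sum_quadratic (f := Polynomial.X ^ 2)
      (g := Polynomial.X ^ 2 - Polynomial.C x) (Polynomial.degree_X_pow 2)
      (Polynomial.degree_X_pow_sub_C two_pos x) hF
    refine ⟨a, b, ?_⟩
    simp only [Polynomial.eval_pow, Polynomial.eval_X, Polynomial.eval_sub,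
      Polynomial.eval_C] at hab
    linear_combination hab
  · obtain ⟨a, ha⟩ := isSquare_of_char_two (even_card_iff_char_two.mpr (by omega)) x
    exact ⟨a, 0, by rw [ha]; ring⟩

namespace Matrix

variable {R : Type*} [CommRing R]

theorem transpose_mul_self_of_rotation (a b : R) :
    !![a, b; -b, a]ᵀ * !![a, b; -b, a] = (a ^ 2 + b ^ 2) • (1 : Matrix (Fin 2) (Fin 2) R) := by
  ext i j
  fin_cases i <;> fin_cases j <;> simp [mul_apply, Fin.sum_univ_two] <;> ring

theorem exists_transpose_mul_self_eq_sq_add_sq_smul_one (a b : R) (p : ℕ) :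
    ∃ C : Matrix (Fin (2 * p)) (Fin (2 * p)) R, Cᵀ * C = (a ^ 2 + b ^ 2) • 1 := by
  let A : Matrix (Fin 2 × Fin p) (Fin 2 × Fin p) R := blockDiagonal fun _ => !![a, b; -b, a]
  have hA : Aᵀ * A = (a ^ 2 + b ^ 2) • 1 := by
    simp only [A, blockDiagonal_transpose, ← blockDiagonal_mul, transpose_mul_self_of_rotation,
      smul_one_eq_diagonal, blockDiagonal_diagonal]
  refine ⟨A.submatrix finProdFinEquiv.symm finProdFinEquiv.symm, ?_⟩
  rw [transpose_submatrix, submatrix_mul_equiv, hA, smul_one_eq_diagonal, smul_one_eq_diagonal,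
    submatrix_diagonal_equiv]
  rfl

theorem exists_transpose_mul_self_eq_diagonal_ite {m n : ℕ} {C : Matrix (Fin m) (Fin m) R}
    {s : R} (hC : Cᵀ * C = s • 1) :
    ∃ C' : Matrix (Fin (m + n)) (Fin (m + n)) R,
      C'ᵀ * C' = diagonal fun i : Fin (m + n) => if (i : ℕ) < m then s else 1 := by
  refine ⟨(fromBlocks C 0 0 1).submatrix finSumFinEquiv.symm finSumFinEquiv.symm, ?_⟩
  rw [transpose_submatrix, submatrix_mul_equiv, fromBlocks_transpose, fromBlocks_multiply]
  simp only [hC, transpose_zero, transpose_one, Matrix.mul_zero, Matrix.zero_mul, Matrix.mul_one,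
    add_zero, zero_add]
  rw [smul_one_eq_diagonal, ← diagonal_one, fromBlocks_diagonal, submatrix_diagonal_equiv]
  congr 1
  funext i
  refine Fin.addCases (fun j => ?_) (fun j => ?_) i <;> simp

end Matrix

theorem diag_nonsquare_projectively_congruent_id_general {F : Type*} [Field F] [Fintype F]
    {k : ℕ} (hk : Odd k) (ν : F)
    (hν : ¬∃ c : F, ν = c ^ 2) :
    ∃ C : Matrix (Fin k) (Fin k) F, IsUnit C ∧
      Matrix.diagonal (fun i : Fin k => if (i : ℕ) < k - 1 then 1 else ν) =
        Cᵀ * (ν • (1 : Matrix (Fin k) (Fin k) F)) * C := by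
  obtain ⟨p, rfl⟩ := hk
  have hν0 : ν ≠ 0 := by
    rintro rfl
    exact hν ⟨0, by ring⟩
  obtain ⟨a, b, hab⟩ := FiniteField.exists_sq_add_sq ν⁻¹
  obtain ⟨C, hC⟩ := exists_transpose_mul_self_eq_sq_add_sq_smul_one a b p
  obtain ⟨C', hC'⟩ := exists_transpose_mul_self_eq_diagonal_ite (n := 1) hC
  rw [hab] at hC'
  refine ⟨C', isUnit_of_mul_isUnit_right (x := C'ᵀ) ?_, ?_⟩
  · rw [hC', isUnit_diagonal, Pi.isUnit_iff]
    intro i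
    split_ifs <;> simp [hν0]
  · rw [Matrix.mul_smul, Matrix.mul_one, Matrix.smul_mul, hC', ← diagonal_smul]
    congr 1
    funext i
    split_ifs <;> simp_all

theorem diag_nonsquare_projectively_congruent_id {F : Type*} [Field F] [Fintype F]
    (hq : Odd (Fintype.card F)) {k : ℕ} (hk : Odd k) (ν : F)
    (hν : ¬∃ c : F, ν = c ^ 2) :
    ∃ C : Matrix (Fin k) (Fin k) F, IsUnit C ∧
      Matrix.diagonal (fun i : Fin k => if (i : ℕ) < k - 1 then 1 else ν) =
        Cᵀ * (ν • (1 : Matrix (Fin k) (Fin k) F)) * C :=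
  diag_nonsquare_projectively_congruent_id_general hk ν hν
end
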